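/- A finite simple graph without isolated vertices that is not complete multipartite contains an induced subgraph isomorphic to one of: 2K₂ (two disjoint edges), P₄ (path on four vertices), or the paw (a triangle with a pendant edge). -/

import Mathlib

def IsCompleteMultipartite {V : Type} (G : SimpleGraph V) : Prop :=
  ∃ s : Setoid V, ∀ u v : V, G.Adj u v ↔ ¬ s.r u v

def twoK2 : SimpleGraph (Fin 4) :=
  SimpleGraph.fromRel (fun a b => (a = 0 ∧ b = 1) ∨ (a = 2 ∧ b = 3))

def pathFour : SimpleGraph (Fin 4) :=
  SimpleGraph.fromRel (fun a b => (a = 0 ∧ b = 1) ∨ (a = 1 ∧ b = 2) ∨ (a = 2 ∧ b = 3))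

def paw : SimpleGraph (Fin 4) :=
  SimpleGraph.fromRel (fun a b =>
    (a = 0 ∧ b = 1) ∨ (a = 1 ∧ b = 2) ∨ (a = 0 ∧ b = 2) ∨ (a = 2 ∧ b = 3))

/-!
If non-adjacency is transitive, its classes are the parts of a complete multipartite structure.
Otherwise there is an edge `xz` and a vertex `y` adjacent to neither end; a neighbour `w` of `y`
then spans a paw, a `P₄` or a `2K₂` with `x, y, z`, according to how many of `x, z` it sees.
-/

namespace SimpleGraph

variable {V W : Type}

theorem IsCompleteMultipartite.exists_setoid {G : SimpleGraph V} (h : G.IsCompleteMultipartite) :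
    ∃ s : Setoid V, ∀ u v, G.Adj u v ↔ ¬s.r u v :=
  ⟨h.setoid, fun _ _ => not_not.symm⟩

/-- Injectivity of `f` is automatic once distinct vertices of `H` have distinct neighbourhoods. -/
def Embedding.ofAdjIff {H : SimpleGraph W} {G : SimpleGraph V}
    (hH : ∀ i j, (∀ k, H.Adj i k ↔ H.Adj j k) → i = j) (f : W → V)
    (hf : ∀ i j, G.Adj (f i) (f j) ↔ H.Adj i j) : H ↪g G where
  toFun := f
  inj' i j hij := hH i j fun k => by rw [← hf, ← hf, hij]
  map_rel_iff' := hf _ _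

section FourVertexGraphs

variable {G : SimpleGraph V} {a b c d : V}

theorem nonempty_twoK2_embedding (hab : G.Adj a b) (hcd : G.Adj c d) (hac : ¬G.Adj a c)
    (had : ¬G.Adj a d) (hbc : ¬G.Adj b c) (hbd : ¬G.Adj b d) : Nonempty (twoK2 ↪g G) := by
  refine ⟨Embedding.ofAdjIff (by simp only [twoK2, fromRel_adj]; decide) ![a, b, c, d] ?_⟩
  intro i j
  fin_cases i <;> fin_cases j <;> simp [twoK2, G.adj_comm, *]

theorem nonempty_pathFour_embedding (hab : G.Adj a b) (hbc : G.Adj b c) (hcd : G.Adj c d)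
    (hac : ¬G.Adj a c) (had : ¬G.Adj a d) (hbd : ¬G.Adj b d) : Nonempty (pathFour ↪g G) := by
  refine ⟨Embedding.ofAdjIff (by simp only [pathFour, fromRel_adj]; decide) ![a, b, c, d] ?_⟩
  intro i j
  fin_cases i <;> fin_cases j <;> simp [pathFour, G.adj_comm, *]

theorem nonempty_paw_embedding (hab : G.Adj a b) (hbc : G.Adj b c) (hac : G.Adj a c)
    (hcd : G.Adj c d) (had : ¬G.Adj a d) (hbd : ¬G.Adj b d) : Nonempty (paw ↪g G) := by
  refine ⟨Embedding.ofAdjIff (by simp only [paw, fromRel_adj]; decide) ![a, b, c, d] ?_⟩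
  intro i j
  fin_cases i <;> fin_cases j <;> simp [paw, G.adj_comm, *]

end FourVertexGraphs

end SimpleGraph

theorem stmt_0_general {V : Type} (G : SimpleGraph V)
    (hiso : ∀ v : V, ∃ w, G.Adj v w)
    (hncm : ¬ IsCompleteMultipartite G) :
    Nonempty (twoK2 ↪g G) ∨ Nonempty (pathFour ↪g G) ∨ Nonempty (paw ↪g G) := by
  obtain ⟨y, x, z, hxz, hyx, hyz⟩ := G.exists_isPathGraph3Compl_of_not_isCompleteMultipartite
    fun h => hncm h.exists_setoid
  obtain ⟨w, hyw⟩ := hiso y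
  have hxy : ¬G.Adj x y := fun h => hyx h.symm
  have hzy : ¬G.Adj z y := fun h => hyz h.symm
  by_cases hxw : G.Adj x w <;> by_cases hzw : G.Adj z w
  · exact .inr <| .inr <| G.nonempty_paw_embedding hxz hzw hxw hyw.symm hxy hzy
  · exact .inr <| .inl <| G.nonempty_pathFour_embedding hxz.symm hxw hyw.symm hzw hzy hxy
  · exact .inr <| .inl <| G.nonempty_pathFour_embedding hxz hzw hyw.symm hxw hxy hzy
  · exact .inl <| G.nonempty_twoK2_embedding hxz hyw hxy hxw hzy hzw

/-- A finite simple graph without isolated vertices that is not complete multipartite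
contains an induced subgraph isomorphic to `2K₂`, `P₄`, or the paw. -/
theorem stmt_0 {V : Type} [Fintype V] (G : SimpleGraph V)
    (hiso : ∀ v : V, ∃ w, G.Adj v w)
    (hncm : ¬ IsCompleteMultipartite G) :
    Nonempty (twoK2 ↪g G) ∨ Nonempty (pathFour ↪g G) ∨ Nonempty (paw ↪g G) :=
  stmt_0_general G hiso hncm
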